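/- arXiv:1201.2915 — 5 statements merged into one kernel-verified Lean document; each statement's English description precedes it below -/
import Mathlib

section
/- If a sequence of nonnegative real numbers $h_0, h_1, \ldots, h_n$ is log-concave with no internal zeros (i.e., $h_{i-1}h_{i+1} \le h_i^2$ for all $0 < i < n$, and there are no indices $i < j < k$ with $h_i \ne 0$, $h_j = 0$, $h_k \ne 0$), then the sequence $f_0, \ldots, f_n$ defined by $f_k = \sum_{i=0}^{k} \binom{n-i}{k-i} h_i$ is strictly log-concave whenever $h_0 > 0$ and some $h_i > 0$ for $i \ge 1$: that is, $f_{k-1}f_{k+1} < f_k^2$ for all $0 < k < n$. -/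
open Finset

/-- The transformed sequence at "level" `t`. -/
private def Fv (h : ℕ → ℝ) (t k : ℕ) : ℝ :=
  ∑ i ∈ Finset.range (k + 1), ((t - i).choose (k - i) : ℝ) * h i

private lemma Fv_zero (h : ℕ → ℝ) (t : ℕ) : Fv h t 0 = h 0 := by
  simp [Fv]

private lemma Fv_top (h : ℕ → ℝ) (t : ℕ) : Fv h t (t + 1) = h (t + 1) := by
  rw [Fv, Finset.sum_range_succ]
  have h1 : ∀ i ∈ Finset.range (t + 1), ((t - i).choose (t + 1 - i) : ℝ) * h i = 0 := by
    intro i hi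
    rw [Finset.mem_range] at hi
    rw [Nat.choose_eq_zero_of_lt (by omega)]
    simp
  rw [Finset.sum_congr rfl h1]
  simp

private lemma Fv_diag (h : ℕ → ℝ) (t : ℕ) : Fv h t t = ∑ i ∈ Finset.range (t + 1), h i := by
  apply Finset.sum_congr rfl
  intro i hi
  rw [Finset.mem_range] at hi
  rw [Nat.choose_self]
  simp

private lemma Fv_subdiag (h : ℕ → ℝ) (t : ℕ) (ht : 1 ≤ t) :
    Fv h t (t - 1) = ∑ i ∈ Finset.range t, ((t - i : ℕ) : ℝ) * h i := by
  rw [Fv, show t - 1 + 1 = t from by omega]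
  apply Finset.sum_congr rfl
  intro i hi
  rw [Finset.mem_range] at hi
  have e1 : t - 1 - i = (t - i) - 1 := by omega
  have e2 : 1 ≤ t - i := by omega
  rw [e1, Nat.choose_symm (by omega), Nat.choose_one_right]

private lemma Fv_pos (n : ℕ) (h : ℕ → ℝ) (h_nonneg : ∀ i, i ≤ n → 0 ≤ h i)
    (h0 : 0 < h 0) (t k : ℕ) (hk : k ≤ t) (ht : t ≤ n) : 0 < Fv h t k := by
  rw [Fv]
  have h1 : ∀ i ∈ Finset.range (k + 1), 0 ≤ ((t - i).choose (k - i) : ℝ) * h i := by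
    intro i hi
    rw [Finset.mem_range] at hi
    exact mul_nonneg (by positivity) (h_nonneg i (by omega))
  have h2 : (0 : ℕ) ∈ Finset.range (k + 1) := by simp
  have h3 : 0 < ((t - 0).choose (k - 0) : ℝ) * h 0 := by
    apply mul_pos _ h0
    have := Nat.choose_pos (show k - 0 ≤ t - 0 from by omega)
    exact_mod_cast this
  calc (0:ℝ) < ((t - 0).choose (k - 0) : ℝ) * h 0 := h3
    _ ≤ _ := Finset.single_le_sum h1 h2

private lemma Fv_rec (h : ℕ → ℝ) (t k : ℕ) (hk1 : 1 ≤ k) (hk2 : k ≤ t + 1) :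
    Fv h (t + 1) k = Fv h t k + Fv h t (k - 1) := by
  have key : ∀ i ∈ Finset.range k, ((t + 1 - i).choose (k - i) : ℝ) * h i
      = ((t - i).choose (k - i) : ℝ) * h i + ((t - i).choose (k - 1 - i) : ℝ) * h i := by
    intro i hi
    rw [Finset.mem_range] at hi
    have e1 : t + 1 - i = (t - i) + 1 := by omega
    have e2 : k - i = (k - 1 - i) + 1 := by omega
    rw [e1, e2, Nat.choose_succ_succ]
    push_cast
    ring
  rw [Fv, Fv, Fv, show k - 1 + 1 = k from by omega, Finset.sum_range_succ,
    Finset.sum_range_succ (fun i => ((t - i).choose (k - i) : ℝ) * h i),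
    Finset.sum_congr rfl key, Finset.sum_add_distrib]
  have e3 : (t + 1 - k).choose (k - k) = 1 := by simp
  have e4 : (t - k).choose (k - k) = 1 := by simp
  rw [e3, e4]
  ring

/-- cross-ratio chain inequality for a log-concave sequence without internal zeros -/
private lemma chain_lemma (n : ℕ) (h : ℕ → ℝ)
    (h_nonneg : ∀ i, i ≤ n → 0 ≤ h i)
    (h_logconcave : ∀ i, 0 < i → i < n → h (i - 1) * h (i + 1) ≤ h i ^ 2)
    (h_no_internal_zeros :
      ¬ ∃ i j k, i < j ∧ j < k ∧ k ≤ n ∧ h i ≠ 0 ∧ h j = 0 ∧ h k ≠ 0) :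
    ∀ d p, p + d + 1 ≤ n → h p * h (p + d + 1) ≤ h (p + 1) * h (p + d) := by
  intro d
  induction d with
  | zero => intro p _; simp [mul_comm]
  | succ d IH =>
    intro p hpn
    by_cases hp : h p = 0
    · rw [hp, zero_mul]
      exact mul_nonneg (h_nonneg _ (by omega)) (h_nonneg _ (by omega))
    by_cases hq : h (p + (d + 1) + 1) = 0
    · rw [hq, mul_zero]
      exact mul_nonneg (h_nonneg _ (by omega)) (h_nonneg _ (by omega))
    have hp1 : h (p + 1) ≠ 0 := by
      intro hz
      exact h_no_internal_zeros ⟨p, p + 1, p + (d + 1) + 1, by omega, by omega, by omega, hp, hz, hq⟩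
    have hp1pos : 0 < h (p + 1) := lt_of_le_of_ne (h_nonneg _ (by omega)) (Ne.symm hp1)
    have hIH := IH (p + 1) (by omega)
    have hLC := h_logconcave (p + 1) (by omega) (by omega)
    rw [show p + 1 - 1 = p from by omega] at hLC
    have hppos : 0 ≤ h p := h_nonneg _ (by omega)
    have hqq : 0 ≤ h (p + (d + 1)) := h_nonneg _ (by omega)
    have key : (h p * h (p + (d + 1) + 1)) * h (p + 1) ≤ (h (p + 1) * h (p + (d + 1))) * h (p + 1) := by
      have e1 : p + 1 + d + 1 = p + (d + 1) + 1 := by omega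
      have e2 : p + 1 + d = p + (d + 1) := by omega
      rw [e1, e2] at hIH
      nlinarith [mul_le_mul_of_nonneg_left hIH hppos, mul_le_mul_of_nonneg_right hLC hqq]
    exact le_of_mul_le_mul_right key hp1pos

private lemma main_inv (n : ℕ) (h : ℕ → ℝ)
    (h_nonneg : ∀ i, i ≤ n → 0 ≤ h i)
    (h_logconcave : ∀ i, 0 < i → i < n → h (i - 1) * h (i + 1) ≤ h i ^ 2)
    (h_no_internal_zeros :
      ¬ ∃ i j k, i < j ∧ j < k ∧ k ≤ n ∧ h i ≠ 0 ∧ h j = 0 ∧ h k ≠ 0)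
    (h_zero_pos : 0 < h 0) :
    ∀ t, 1 ≤ t → t ≤ n →
      (∀ k, 0 < k → k < t → Fv h t (k - 1) * Fv h t (k + 1) < Fv h t k ^ 2) ∧
      (t < n → Fv h t (t - 1) * h (t + 1) ≤ Fv h t t ^ 2) := by
  intro t
  induction t with
  | zero => intro ht; omega
  | succ t IH =>
    intro _ htn1
    by_cases ht0 : t = 0
    · subst ht0
      constructor
      · intro k hk0 hk1; omega
      · intro h1n
        have e0 : Fv h 1 (1 - 1) = h 0 := Fv_zero h 1
        have e1 : Fv h 1 1 = h 0 + h 1 := by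
          rw [Fv_diag, Finset.sum_range_succ, Finset.sum_range_one]
        have hlc := h_logconcave 1 (by omega) h1n
        rw [show (1:ℕ) - 1 = 0 from rfl] at hlc
        have h0n : 0 ≤ h 0 := h_zero_pos.le
        have h1nn : 0 ≤ h 1 := h_nonneg 1 (by omega)
        rw [e0, e1]
        nlinarith
    · have ht1 : 1 ≤ t := by omega
      have htn : t < n := by omega
      obtain ⟨P2, P3⟩ := IH ht1 (by omega)
      have P3' := P3 htn
      have apos : ∀ j, j ≤ t → 0 < Fv h t j := fun j hj =>
        Fv_pos n h h_nonneg h_zero_pos t j hj (by omega)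
      have atop : Fv h t (t + 1) = h (t + 1) := Fv_top h t
      have htopn : 0 ≤ h (t + 1) := h_nonneg _ (by omega)
      have weak : ∀ j, 0 < j → j ≤ t → Fv h t (j - 1) * Fv h t (j + 1) ≤ Fv h t j ^ 2 := by
        intro j hj0 hjt
        rcases lt_or_eq_of_le hjt with hlt | heq
        · exact (P2 j hj0 hlt).le
        · subst heq; rw [atop]; exact P3'
      constructor
      · -- strict log-concavity at level t+1
        intro k hk0 hkt1
        have hkt : k ≤ t := by omega
        have e_m : Fv h (t + 1) (k + 1) = Fv h t (k + 1) + Fv h t k := by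
          have := Fv_rec h t (k + 1) (by omega) (by omega)
          rwa [show k + 1 - 1 = k from by omega] at this
        have e_k : Fv h (t + 1) k = Fv h t k + Fv h t (k - 1) :=
          Fv_rec h t k (by omega) (by omega)
        have pkp1 : 0 ≤ Fv h t (k + 1) := by
          rcases lt_or_eq_of_le hkt with hlt | heq
          · exact (apos (k + 1) (by omega)).le
          · rw [heq, atop]; exact htopn
        rcases Nat.lt_or_ge k 2 with hk2 | hk2
        · -- k = 1
          have hk1 : k = 1 := by omega
          subst hk1
          have e_l : Fv h (t + 1) (1 - 1) = Fv h t 0 := by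
            rw [show (1:ℕ) - 1 = 0 from rfl, Fv_zero, Fv_zero]
          rw [e_l, e_m, e_k]
          have w := weak 1 (by omega) ht1
          rw [show (1:ℕ) - 1 = 0 from rfl] at w
          have p0 := apos 0 (by omega)
          have p1 := apos 1 ht1
          rw [show (1:ℕ) - 1 = 0 from rfl]
          nlinarith
        · -- k ≥ 2
          have e_l : Fv h (t + 1) (k - 1) = Fv h t (k - 1) + Fv h t (k - 2) := by
            have := Fv_rec h t (k - 1) (by omega) (by omega)
            rwa [show k - 1 - 1 = k - 2 from by omega] at this
          rw [e_l, e_m, e_k]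
          have w1 := weak k hk0 hkt
          have w2 : Fv h t (k - 2) * Fv h t k ≤ Fv h t (k - 1) ^ 2 := by
            have := weak (k - 1) (by omega) (by omega)
            rwa [show k - 1 - 1 = k - 2 from by omega,
              show k - 1 + 1 = k from by omega] at this
          have pk := apos k hkt
          have pk1 := apos (k - 1) (by omega)
          have pk2 : 0 ≤ Fv h t (k - 2) := (apos (k - 2) (by omega)).le
          have ts : Fv h t (k - 2) * Fv h t (k + 1) ≤ Fv h t (k - 1) * Fv h t k := by
            have big := mul_le_mul w2 w1 (mul_nonneg pk1.le pkp1) (sq_nonneg _)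
            refine le_of_mul_le_mul_right ?_ (mul_pos pk1 pk)
            nlinarith [big]
          rcases lt_or_eq_of_le hkt with hlt | heq
          · have s1 := P2 k hk0 hlt
            nlinarith [s1, w2, ts]
          · have s2 : Fv h t (k - 2) * Fv h t k < Fv h t (k - 1) ^ 2 := by
              have := P2 (k - 1) (by omega) (by omega)
              rwa [show k - 1 - 1 = k - 2 from by omega,
                show k - 1 + 1 = k from by omega] at this
            nlinarith [w1, s2, ts]
      · -- boundary inequality at level t+1
        intro hlt
        have chain : ∀ i, i ≤ t → h i * h (t + 2) ≤ h (i + 1) * h (t + 1) := by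
          intro i hi
          have c := chain_lemma n h h_nonneg h_logconcave h_no_internal_zeros
            (t + 1 - i) i (by omega)
          rwa [show i + (t + 1 - i) + 1 = t + 2 from by omega,
            show i + (t + 1 - i) = t + 1 from by omega] at c
        have e1 : Fv h (t + 1) (t + 1 - 1) = Fv h t t + Fv h t (t - 1) := by
          rw [show t + 1 - 1 = t from by omega]
          exact Fv_rec h t t (by omega) (by omega)
        have e2 : Fv h (t + 1) (t + 1) = h (t + 1) + Fv h t t := by
          have := Fv_rec h t (t + 1) (by omega) (by omega)
          rwa [show t + 1 - 1 = t from by omega, atop] at this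
        have A : Fv h t t * h (t + 2) ≤ h (t + 1) * (Fv h t t + h (t + 1)) := by
          rw [Fv_diag]
          calc (∑ i ∈ Finset.range (t + 1), h i) * h (t + 2)
              = ∑ i ∈ Finset.range (t + 1), h i * h (t + 2) := by rw [Finset.sum_mul]
            _ ≤ ∑ i ∈ Finset.range (t + 1), h (i + 1) * h (t + 1) := by
                apply Finset.sum_le_sum
                intro i hi
                rw [Finset.mem_range] at hi
                exact chain i (by omega)
            _ = (∑ i ∈ Finset.range (t + 1), h (i + 1)) * h (t + 1) := by rw [Finset.sum_mul]
            _ ≤ (∑ i ∈ Finset.range (t + 1), h i + h (t + 1)) * h (t + 1) := by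
                apply mul_le_mul_of_nonneg_right _ htopn
                have hs : ∑ i ∈ Finset.range (t + 2), h i
                    = (∑ i ∈ Finset.range (t + 1), h (i + 1)) + h 0 :=
                  Finset.sum_range_succ' h (t + 1)
                have hs2 : ∑ i ∈ Finset.range (t + 2), h i
                    = ∑ i ∈ Finset.range (t + 1), h i + h (t + 1) :=
                  Finset.sum_range_succ h (t + 1)
                linarith [h_zero_pos.le]
            _ = h (t + 1) * (∑ i ∈ Finset.range (t + 1), h i + h (t + 1)) := by ring
        have B : Fv h t (t - 1) * h (t + 2)
            ≤ h (t + 1) * (Fv h t t + Fv h t (t - 1)) := by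
          rw [Fv_subdiag h t ht1, Fv_diag]
          have keysum : ∑ i ∈ Finset.range t, ((t - i : ℕ) : ℝ) * h (i + 1)
              ≤ ∑ i ∈ Finset.range (t + 1), h i
                + ∑ i ∈ Finset.range t, ((t - i : ℕ) : ℝ) * h i := by
            set G : ℕ → ℝ := fun j => ((t + 1 - j : ℕ) : ℝ) * h j with hGdef
            have hG : ∑ j ∈ Finset.range (t + 1), G j
                = (∑ i ∈ Finset.range t, G (i + 1)) + G 0 := Finset.sum_range_succ' G t
            have hG1 : ∑ i ∈ Finset.range t, G (i + 1)
                = ∑ i ∈ Finset.range t, ((t - i : ℕ) : ℝ) * h (i + 1) := by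
              apply Finset.sum_congr rfl
              intro i hi
              rw [Finset.mem_range] at hi
              simp only [hGdef]
              rw [show t + 1 - (i + 1) = t - i from by omega]
            have hG2 : ∑ j ∈ Finset.range (t + 1), G j
                = ∑ j ∈ Finset.range (t + 1), h j
                  + ∑ j ∈ Finset.range t, ((t - j : ℕ) : ℝ) * h j := by
              have expand : ∀ j ∈ Finset.range (t + 1),
                  G j = h j + ((t - j : ℕ) : ℝ) * h j := by
                intro j hj
                rw [Finset.mem_range] at hj
                simp only [hGdef]
                rw [show t + 1 - j = (t - j) + 1 from by omega]
                push_cast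
                ring
              rw [Finset.sum_congr rfl expand, Finset.sum_add_distrib]
              congr 1
              rw [Finset.sum_range_succ]
              simp
            have hG0 : 0 ≤ G 0 := by
              simp only [hGdef]
              exact mul_nonneg (Nat.cast_nonneg _) h_zero_pos.le
            linarith [hG.symm.trans hG2, hG1]
          calc (∑ i ∈ Finset.range t, ((t - i : ℕ) : ℝ) * h i) * h (t + 2)
              = ∑ i ∈ Finset.range t, ((t - i : ℕ) : ℝ) * (h i * h (t + 2)) := by
                rw [Finset.sum_mul]; apply Finset.sum_congr rfl; intros; ring
            _ ≤ ∑ i ∈ Finset.range t, ((t - i : ℕ) : ℝ) * (h (i + 1) * h (t + 1)) := by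
                apply Finset.sum_le_sum
                intro i hi
                rw [Finset.mem_range] at hi
                exact mul_le_mul_of_nonneg_left (chain i (by omega)) (Nat.cast_nonneg _)
            _ = (∑ i ∈ Finset.range t, ((t - i : ℕ) : ℝ) * h (i + 1)) * h (t + 1) := by
                rw [Finset.sum_mul]; apply Finset.sum_congr rfl; intros; ring
            _ ≤ (∑ i ∈ Finset.range (t + 1), h i
                  + ∑ i ∈ Finset.range t, ((t - i : ℕ) : ℝ) * h i) * h (t + 1) :=
                mul_le_mul_of_nonneg_right keysum htopn
            _ = h (t + 1) * (∑ i ∈ Finset.range (t + 1), h i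
                  + ∑ i ∈ Finset.range t, ((t - i : ℕ) : ℝ) * h i) := by ring
        rw [e1, e2]
        nlinarith [A, B, P3']

/-- If `h 0, …, h n` is a log-concave sequence of nonnegative reals with no
internal zeros, `h 0 > 0` and some `h i > 0` for `i ≥ 1`, then the sequence
`f k = ∑_{i=0}^{k} (n-i).choose (k-i) * h i` is strictly log-concave. -/
theorem hvector_to_fvector_strict_log_concave
    (n : ℕ) (h : ℕ → ℝ)
    (h_nonneg : ∀ i, i ≤ n → 0 ≤ h i)
    (h_logconcave : ∀ i, 0 < i → i < n → h (i - 1) * h (i + 1) ≤ h i ^ 2)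
    (h_no_internal_zeros :
      ¬ ∃ i j k, i < j ∧ j < k ∧ k ≤ n ∧ h i ≠ 0 ∧ h j = 0 ∧ h k ≠ 0)
    (h_zero_pos : 0 < h 0)
    (h_some_pos : ∃ i, 1 ≤ i ∧ i ≤ n ∧ 0 < h i)
    (f : ℕ → ℝ)
    (hf : ∀ k, k ≤ n → f k = ∑ i ∈ Finset.range (k + 1),
      ((n - i).choose (k - i) : ℝ) * h i) :
    ∀ k, 0 < k → k < n → f (k - 1) * f (k + 1) < f k ^ 2 := by
  intro k hk0 hkn
  have key := (main_inv n h h_nonneg h_logconcave h_no_internal_zeros h_zero_pos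
    n (by omega) le_rfl).1 k hk0 hkn
  rw [hf (k - 1) (by omega), hf k (by omega), hf (k + 1) (by omega)]
  exact key
end

section
/- Let $M$ be a finite loopless matroid on a linearly ordered ground set $E$, of rank $r+1$. Then for each $i$, the number of cardinality-$i$ subsets of $E$ that contain no broken circuit of $M$ equals the absolute value $w_i$ of the coefficient of $q^{r+1-i}$ in the characteristic polynomial $\chi_M(q) = \sum_{i=0}^{r+1}(-1)^i w_i q^{r+1-i}$. -/
open Finset Polynomial

open scoped Classical in
/-- The rank of a set `X` in a matroid `M`. -/
noncomputable def matroidRank {α : Type*} (M : Matroid α) (X : Set α) : ℕ :=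
  sSup {n | ∃ I : Finset α, ↑I ⊆ X ∧ M.Indep ↑I ∧ I.card = n}

/-- A circuit of a matroid: a minimal dependent set (here as a finset). -/
def IsMatroidCircuit {α : Type*} (M : Matroid α) (C : Finset α) : Prop :=
  ↑C ⊆ M.E ∧ ¬ M.Indep ↑C ∧ ∀ D : Finset α, D ⊂ C → M.Indep ↑D

/-- A broken circuit: a circuit with its least element (in the linear order) removed. -/
def IsBrokenCircuit {α : Type*} [LinearOrder α] (M : Matroid α) (B : Finset α) : Prop :=
  ∃ C : Finset α, IsMatroidCircuit M C ∧ ∃ h : C.Nonempty, B = C.erase (C.min' h)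

open scoped Classical in
/-- The characteristic polynomial of a matroid `M` of rank `r + 1`, with respect to
a Möbius function `μ` of the lattice of flats. -/
noncomputable def charPoly {α : Type*} [Fintype α] (M : Matroid α) (μ : Finset α → ℤ)
    (r : ℕ) : Polynomial ℤ :=
  ∑ F ∈ Finset.univ.filter (fun F : Finset α => M.IsFlat ↑F),
    C (μ F) * X ^ (r + 1 - matroidRank M ↑F)

/-!
Grouping the subsets of `E` by their closure, Möbius inversion on the lattice of flats gives
`μ(0̂, F) = ∑_{cl S = F} (-1)^|S|`, so the coefficient of `q^(r+1-i)` in `χ_M` is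
`∑_{rk S = i} (-1)^|S|`. Call `e` a pivot of `S` if `e ∈ cl (S ∩ (e, ∞))`, i.e. `e` is the
least element of a circuit whose broken circuit lies in `S`. Toggling a pivot `e` in `S` changes
neither `cl S` nor `cl (S ∩ (f, ∞))` for any `f`, hence neither the rank nor the pivots of `S`;
toggling the least pivot is therefore a sign-reversing involution on the sets of rank `i` that
contain a broken circuit. What remains are the sets without broken circuits; these are
independent, so their rank is their cardinality.
-/

open scoped symmDiff

namespace Finset

theorem neg_one_pow_card_symmDiff_singleton {ι R : Type*} [DecidableEq ι] [Ring R]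
    (S : Finset ι) (e : ι) : (-1 : R) ^ (S ∆ {e}).card = -(-1) ^ S.card := by
  by_cases he : e ∈ S
  · have hS : S ∆ {e} = S.erase e := by ext x; by_cases x = e <;> simp_all [mem_symmDiff]
    rw [hS, ← card_erase_add_one he, pow_succ, mul_neg_one, neg_neg]
  · have hS : S ∆ {e} = insert e S := by ext x; by_cases x = e <;> simp_all [mem_symmDiff]
    rw [hS, card_insert_of_notMem he, pow_succ, mul_neg_one]

theorem sum_neg_one_pow_card_eq_zero_of_symmDiff {ι R : Type*} [LinearOrder ι] [Ring R]
    {s : Finset (Finset ι)} (A : Finset ι → Finset ι) (hA : ∀ S ∈ s, (A S).Nonempty)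
    (h : ∀ S ∈ s, ∀ e ∈ A S, S ∆ {e} ∈ s ∧ A (S ∆ {e}) = A S) :
    ∑ S ∈ s, (-1 : R) ^ S.card = 0 := by
  refine sum_involution (fun S hS => S ∆ {(A S).min' (hA S hS)}) (fun S _ => ?_)
    (fun S _ _ => ?_) (fun S hS => (h S hS _ (min'_mem _ _)).1) (fun S hS => ?_)
  · rw [neg_one_pow_card_symmDiff_singleton, add_neg_cancel]
  · simp only [ne_eq, symmDiff_eq_left, bot_eq_empty, singleton_ne_empty, not_false_eq_true]
  · simp only [(h S hS _ (min'_mem _ _)).2, symmDiff_symmDiff_cancel_right]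

theorem eq_of_sum_powerset_filter_eq {ι β : Type*} [DecidableEq ι] [AddCancelCommMonoid β]
    {p : Finset ι → Prop} [DecidablePred p] {f g : Finset ι → β}
    (h : ∀ F, p F → ∑ G ∈ F.powerset with p G, f G = ∑ G ∈ F.powerset with p G, g G) :
    ∀ F, p F → f F = g F := by
  intro F
  induction F using strongInduction with | H F ih => ?_
  intro hF
  have hmem : F ∈ F.powerset.filter p := mem_filter.2 ⟨mem_powerset_self F, hF⟩
  have hlower : ∑ G ∈ (F.powerset.filter p).erase F, f G
      = ∑ G ∈ (F.powerset.filter p).erase F, g G := by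
    refine sum_congr rfl fun G hG => ?_
    simp only [mem_erase, mem_filter, mem_powerset] at hG
    exact ih G (ssubset_of_subset_of_ne hG.2.1 hG.1) hG.2.2
  have := h F hF
  rwa [← add_sum_erase _ _ hmem, ← add_sum_erase _ _ hmem, hlower, add_left_inj] at this

end Finset

open scoped Classical

open Matroid

section Rank

variable {α : Type*} [Finite α] {M : Matroid α}

theorem matroidRank_eq_eRk (X : Set α) : (matroidRank M X : ℕ∞) = M.eRk X := by
  obtain ⟨I, hI⟩ := M.exists_isBasis' X
  have hIfin : I.Finite := I.toFinite
  have hgreatest : IsGreatest {n | ∃ J : Finset α, ↑J ⊆ X ∧ M.Indep ↑J ∧ J.card = n}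
      hIfin.toFinset.card := by
    refine ⟨⟨hIfin.toFinset, by simpa using hI.subset, by simpa using hI.indep, rfl⟩, ?_⟩
    rintro _ ⟨J, hJX, hJ, rfl⟩
    have := hJ.encard_le_eRk_of_subset hJX
    rw [hI.eRk_eq_encard, Set.encard_coe_eq_coe_finsetCard,
      hIfin.encard_eq_coe_toFinset_card] at this
    exact_mod_cast this
  rw [matroidRank, hgreatest.csSup_eq, hI.eRk_eq_encard, hIfin.encard_eq_coe_toFinset_card]

theorem matroidRank_mono {X Y : Set α} (h : X ⊆ Y) : matroidRank M X ≤ matroidRank M Y := by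
  have := M.eRk_mono h
  rwa [← matroidRank_eq_eRk, ← matroidRank_eq_eRk, Nat.cast_le] at this

theorem matroidRank_eq_of_closure_eq {X Y : Set α} (h : M.closure X = M.closure Y) :
    matroidRank M X = matroidRank M Y := by
  have := congrArg M.eRk h
  rwa [eRk_closure_eq, eRk_closure_eq, ← matroidRank_eq_eRk, ← matroidRank_eq_eRk,
    Nat.cast_inj] at this

theorem Matroid.Indep.matroidRank_eq_card {S : Finset α} (hS : M.Indep ↑S) :
    matroidRank M ↑S = S.card := by
  have := hS.eRk_eq_encard
  rwa [← matroidRank_eq_eRk, Set.encard_coe_eq_coe_finsetCard, Nat.cast_inj] at this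

end Rank

section Circuit

variable {α : Type*} {M : Matroid α}

theorem isMatroidCircuit_iff_isCircuit {C : Finset α} :
    IsMatroidCircuit M C ↔ M.IsCircuit ↑C := by
  rw [isCircuit_iff_forall_ssubset, IsMatroidCircuit, Dep, ← and_assoc,
    and_comm (a := ↑C ⊆ M.E)]
  refine and_congr_right fun _ => ⟨fun h I hI => ?_, fun h D hD => h (by simpa using hD)⟩
  obtain ⟨D, rfl⟩ := (C.finite_toSet.subset hI.subset).exists_finset_coe
  exact h D (by simpa using hI)

theorem Matroid.closure_symmDiff_singleton_eq {X : Set α} {e : α}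
    (he : e ∈ M.closure (X \ {e})) : M.closure (X ∆ {e}) = M.closure X := by
  have hsdiff : X ∆ {e} \ {e} = X \ {e} := by ext; simp
  rw [← closure_sdiff_singleton_eq_closure (hsdiff ▸ he), hsdiff,
    closure_sdiff_singleton_eq_closure he]

end Circuit

section BrokenCircuit

variable {α : Type*} [LinearOrder α] {M : Matroid α}

theorem mem_closure_inter_Ioi_iff {S : Finset α} {e : α} :
    e ∈ M.closure (↑S ∩ Set.Ioi e) ↔
      ∃ C, IsMatroidCircuit M C ∧ ∃ h : C.Nonempty, C.min' h = e ∧ C.erase e ⊆ S := by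
  rw [mem_closure_iff_exists_isCircuit (by simp)]
  constructor
  · rintro ⟨C, hCS, hC, heC⟩
    have hCfin := ((S.finite_toSet.inter_of_left _).insert e).subset hCS
    obtain ⟨C, rfl⟩ := hCfin.exists_finset_coe
    refine ⟨C, isMatroidCircuit_iff_isCircuit.2 hC, ⟨e, heC⟩, ?_, fun x hx => ?_⟩
    · refine le_antisymm (C.min'_le e heC) (C.le_min' _ e fun x hx => ?_)
      obtain rfl | ⟨-, hex⟩ := hCS hx
      exacts [le_rfl, le_of_lt hex]
    · obtain ⟨hxe, hxC⟩ := mem_erase.1 hx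
      exact ((hCS hxC).resolve_left hxe).1
  · rintro ⟨C, hC, hne, rfl, hCS⟩
    refine ⟨↑C, fun x hx => ?_, isMatroidCircuit_iff_isCircuit.1 hC, C.min'_mem hne⟩
    by_cases hxe : x = C.min' hne
    · exact Or.inl hxe
    · exact Or.inr ⟨hCS (mem_erase.2 ⟨hxe, hx⟩),
        lt_of_le_of_ne (C.min'_le x hx) (Ne.symm hxe)⟩

theorem indep_of_forall_not_isBrokenCircuit_subset {S : Finset α} (hS : ↑S ⊆ M.E)
    (h : ∀ B, IsBrokenCircuit M B → ¬ B ⊆ S) : M.Indep ↑S := by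
  by_contra hdep
  obtain ⟨C, hCS, hC⟩ := Dep.exists_isCircuit_subset ⟨hdep, hS⟩
  obtain ⟨C, rfl⟩ := (S.finite_toSet.subset hCS).exists_finset_coe
  have hne : C.Nonempty := by simpa using hC.nonempty
  exact h _ ⟨C, isMatroidCircuit_iff_isCircuit.2 hC, hne, rfl⟩
    ((erase_subset _ _).trans (coe_subset.1 hCS))

/-- By `mem_closure_inter_Ioi_iff`, these are the least elements of the circuits whose broken
circuits lie in `S`. -/
noncomputable def brokenCircuitMins [Fintype α] (M : Matroid α) (S : Finset α) : Finset α :=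
  univ.filter fun e => e ∈ M.closure (↑S ∩ Set.Ioi e)

variable [Fintype α]

theorem mem_brokenCircuitMins {S : Finset α} {e : α} :
    e ∈ brokenCircuitMins M S ↔ e ∈ M.closure (↑S ∩ Set.Ioi e) := by
  simp [brokenCircuitMins]

theorem exists_isBrokenCircuit_subset_iff {S : Finset α} :
    (∃ B, IsBrokenCircuit M B ∧ B ⊆ S) ↔ (brokenCircuitMins M S).Nonempty := by
  simp only [Finset.Nonempty, mem_brokenCircuitMins, mem_closure_inter_Ioi_iff]
  constructor
  · rintro ⟨B, ⟨C, hC, hne, rfl⟩, hCS⟩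
    exact ⟨_, C, hC, hne, rfl, hCS⟩
  · rintro ⟨e, C, hC, hne, rfl, hCS⟩
    exact ⟨_, ⟨C, hC, hne, rfl⟩, hCS⟩

variable {S : Finset α} {e : α}

theorem closure_symmDiff_of_mem_brokenCircuitMins (he : e ∈ brokenCircuitMins M S) :
    M.closure ↑(S ∆ {e}) = M.closure ↑S := by
  rw [coe_symmDiff, coe_singleton]
  refine closure_symmDiff_singleton_eq
    (M.closure_subset_closure ?_ (mem_brokenCircuitMins.1 he))
  exact fun x ⟨hxS, hex⟩ => ⟨hxS, (ne_of_lt hex).symm⟩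

theorem brokenCircuitMins_symmDiff_of_mem (he : e ∈ brokenCircuitMins M S) :
    brokenCircuitMins M (S ∆ {e}) = brokenCircuitMins M S := by
  suffices h : ∀ f, M.closure (↑(S ∆ {e}) ∩ Set.Ioi f) = M.closure (↑S ∩ Set.Ioi f) by
    ext f; rw [mem_brokenCircuitMins, mem_brokenCircuitMins, h]
  intro f
  rw [coe_symmDiff, coe_singleton, Set.inter_symmDiff_distrib_right]
  by_cases hfe : f < e
  · rw [Set.singleton_inter_of_mem (s := Set.Ioi f) hfe]
    refine closure_symmDiff_singleton_eq
      (M.closure_subset_closure ?_ (mem_brokenCircuitMins.1 he))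
    exact fun x ⟨hxS, hex⟩ => ⟨⟨hxS, hfe.trans hex⟩, (ne_of_lt hex).symm⟩
  · rw [Set.singleton_inter_of_notMem (s := Set.Ioi f) hfe, ← Set.bot_eq_empty, symmDiff_bot]

end BrokenCircuit

section CharacteristicPolynomial

variable {α : Type*} [Fintype α] {M : Matroid α}

noncomputable def Matroid.closureFinset (M : Matroid α) (S : Finset α) : Finset α :=
  (M.closure ↑S).toFinset

theorem Matroid.coe_closureFinset (S : Finset α) :
    (↑(M.closureFinset S) : Set α) = M.closure ↑S := by
  simp [closureFinset]

theorem sum_isFlat_sum_closureFinset_eq {β : Type*} [AddCommMonoid β] (P : Finset α → Prop)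
    [DecidablePred P] (f : Finset α → β) :
    ∑ G ∈ univ.filter (fun G : Finset α => M.IsFlat ↑G ∧ P G),
        ∑ S ∈ univ.filter (M.closureFinset · = G), f S
      = ∑ S ∈ univ.filter (fun S => P (M.closureFinset S)), f S := by
  rw [sum_fiberwise_eq_sum_filter]
  congr 1
  ext S
  simp [coe_closureFinset]

theorem sum_isFlat_subset_sum_closureFinset_eq (hE : M.E = Set.univ) {F : Finset α}
    (hF : M.IsFlat ↑F) :
    ∑ G ∈ univ.filter (fun G : Finset α => M.IsFlat ↑G ∧ (G : Set α) ⊆ ↑F),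
        ∑ S ∈ univ.filter (M.closureFinset · = G), (-1 : ℤ) ^ S.card
      = if F = ∅ then 1 else 0 := by
  rw [sum_isFlat_sum_closureFinset_eq, ← sum_powerset_neg_one_pow_card]
  congr 1
  ext S
  simp only [mem_filter, mem_univ, true_and, mem_powerset, coe_closureFinset]
  refine ⟨fun h => coe_subset.1 ((M.subset_closure _ (hE ▸ Set.subset_univ _)).trans h),
    fun h => hF.closure ▸ M.closure_subset_closure (coe_subset.2 h)⟩

theorem mobius_eq_sum_closureFinset_eq [M.Loopless] (hE : M.E = Set.univ)
    {μ : Finset α → ℤ}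
    (hμ : ∀ F : Finset α, M.IsFlat ↑F →
      ∑ G ∈ univ.filter (fun G : Finset α => M.IsFlat ↑G ∧ (G : Set α) ⊆ ↑F), μ G
        = if (F : Set α) = M.closure ∅ then 1 else 0)
    {F : Finset α} (hF : M.IsFlat ↑F) :
    μ F = ∑ S ∈ univ.filter (M.closureFinset · = F), (-1 : ℤ) ^ S.card := by
  have hlower : ∀ F : Finset α,
      univ.filter (fun G : Finset α => M.IsFlat ↑G ∧ (G : Set α) ⊆ ↑F)
        = F.powerset.filter fun G : Finset α => M.IsFlat ↑G := by
    intro F; ext; simp [and_comm]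
  refine eq_of_sum_powerset_filter_eq (p := fun F : Finset α => M.IsFlat ↑F) (f := μ)
    (g := fun F => ∑ S ∈ univ.filter (M.closureFinset · = F), (-1 : ℤ) ^ S.card)
    (fun F hF => ?_) F hF
  rw [← hlower, hμ F hF, sum_isFlat_subset_sum_closureFinset_eq hE hF]
  simp only [closure_empty, loops_eq_empty, coe_eq_empty]

theorem coeff_charPoly (μ : Finset α → ℤ) {r i : ℕ}
    (h_rank : matroidRank M Set.univ = r + 1) (hi : i ≤ r + 1) :
    (charPoly M μ r).coeff (r + 1 - i)
      = ∑ F ∈ univ.filter (fun F : Finset α => M.IsFlat ↑F ∧ matroidRank M ↑F = i),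
          μ F := by
  rw [charPoly, finsetSum_coeff, ← filter_filter,
    sum_filter (fun F : Finset α => matroidRank M ↑F = i)]
  refine sum_congr rfl fun F _ => ?_
  have hF : matroidRank M ↑F ≤ r + 1 := h_rank ▸ matroidRank_mono (Set.subset_univ _)
  rw [coeff_C_mul, coeff_X_pow, mul_ite, mul_one, mul_zero]
  exact if_congr (by omega) rfl rfl

theorem sum_isFlat_matroidRank_eq_sum_closureFinset_eq (i : ℕ) :
    ∑ F ∈ univ.filter (fun F : Finset α => M.IsFlat ↑F ∧ matroidRank M ↑F = i),
        ∑ S ∈ univ.filter (M.closureFinset · = F), (-1 : ℤ) ^ S.card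
      = ∑ S ∈ univ.filter (fun S : Finset α => matroidRank M ↑S = i),
          (-1 : ℤ) ^ S.card := by
  rw [sum_isFlat_sum_closureFinset_eq]
  congr 1
  ext S
  simp [coe_closureFinset, matroidRank_eq_of_closure_eq (M.closure_closure _)]

end CharacteristicPolynomial

theorem sum_neg_one_pow_card_filter_matroidRank_eq {α : Type*} [Fintype α] [LinearOrder α]
    {M : Matroid α} (hE : M.E = Set.univ) (i : ℕ) :
    ∑ S ∈ univ.filter (fun S : Finset α => matroidRank M ↑S = i), (-1 : ℤ) ^ S.card
      = (-1 : ℤ) ^ i * (((univ.powersetCard i).filter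
          (fun S : Finset α => ∀ B, IsBrokenCircuit M B → ¬ B ⊆ S)).card : ℤ) := by
  rw [← sum_filter_add_sum_filter_not _ fun S => (brokenCircuitMins M S).Nonempty,
    filter_filter, filter_filter]
  have hcancel : ∑ S ∈ univ.filter (fun S : Finset α =>
      matroidRank M ↑S = i ∧ (brokenCircuitMins M S).Nonempty), (-1 : ℤ) ^ S.card = 0 := by
    refine sum_neg_one_pow_card_eq_zero_of_symmDiff (brokenCircuitMins M)
      (fun S hS => (mem_filter.1 hS).2.2) fun S hS e he => ?_
    have hmins := brokenCircuitMins_symmDiff_of_mem he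
    refine ⟨mem_filter.2 ⟨mem_univ _, ?_, hmins ▸ (mem_filter.1 hS).2.2⟩, hmins⟩
    exact (matroidRank_eq_of_closure_eq (closure_symmDiff_of_mem_brokenCircuitMins he)).trans
      (mem_filter.1 hS).2.1
  have hnbc : univ.filter (fun S : Finset α =>
      matroidRank M ↑S = i ∧ ¬ (brokenCircuitMins M S).Nonempty)
      = (univ.powersetCard i).filter
          (fun S : Finset α => ∀ B, IsBrokenCircuit M B → ¬ B ⊆ S) := by
    ext S
    have hiff :
        (∀ B, IsBrokenCircuit M B → ¬ B ⊆ S) ↔ ¬ (brokenCircuitMins M S).Nonempty := by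
      rw [← exists_isBrokenCircuit_subset_iff]
      simp only [not_exists, not_and]
    simp only [mem_filter, mem_univ, true_and, mem_powersetCard_univ, ← hiff]
    refine and_congr_left fun h => ?_
    have hS : M.Indep ↑S :=
      indep_of_forall_not_isBrokenCircuit_subset (hE ▸ Set.subset_univ _) h
    rw [hS.matroidRank_eq_card]
  rw [hcancel, zero_add, hnbc, sum_congr rfl fun S hS => by
    rw [mem_powersetCard_univ.1 (mem_filter.1 hS).1], sum_const, nsmul_eq_mul, mul_comm]

open scoped Classical in
/-- **Whitney's broken circuit theorem.** For a finite loopless matroid `M` of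
rank `r+1` on a linearly ordered ground set, the number of cardinality-`i` subsets containing
no broken circuit equals the absolute value `w i` of the coefficient of `q^(r+1-i)` in the
characteristic polynomial `χ_M(q) = ∑ (-1)^i w i q^(r+1-i)`; that is, the coefficient of
`q^(r+1-i)` equals `(-1)^i` times that number. -/
theorem whitney_broken_circuit {α : Type*} [Fintype α] [LinearOrder α]
    (M : Matroid α) (hE : M.E = Set.univ)
    (h_loopless : ∀ a : α, M.Indep {a})
    (r : ℕ) (h_rank : matroidRank M Set.univ = r + 1)
    (μ : Finset α → ℤ)
    (hμ : ∀ F : Finset α, M.IsFlat ↑F →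
      (∑ G ∈ Finset.univ.filter (fun G : Finset α => M.IsFlat ↑G ∧ (G : Set α) ⊆ ↑F), μ G)
        = if (F : Set α) = M.closure ∅ then 1 else 0) :
    ∀ i, i ≤ r + 1 →
      (charPoly M μ r).coeff (r + 1 - i) =
        (-1 : ℤ) ^ i *
          (((Finset.univ.powersetCard i).filter
            (fun S : Finset α => ∀ B, IsBrokenCircuit M B → ¬ B ⊆ S)).card : ℤ) := by
  intro i hi
  have : M.Loopless := loopless_iff_forall_isNonloop.2 fun e _ => indep_singleton.1 (h_loopless e)
  rw [coeff_charPoly μ h_rank hi,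
    sum_congr rfl fun F hF => mobius_eq_sum_closureFinset_eq hE hμ (mem_filter.1 hF).2.1,
    sum_isFlat_matroidRank_eq_sum_closureFinset_eq, sum_neg_one_pow_card_filter_matroidRank_eq hE]
end

section
/- Let $h_0, \ldots, h_r$ be a log-concave sequence of nonnegative integers with no internal zeros and $h_0 = 1$. Define $w_k = \sum_{i=0}^{k} \binom{r-i}{k-i} h_i$. Then the sequence $w_0, \ldots, w_r$ is log-concave with no internal zeros. -/
open Finset


/-- Binomial coefficient with integer lower index (zero when negative). -/
def Bc (n : ℕ) (j : ℤ) : ℤ := if 0 ≤ j then (n.choose j.toNat : ℤ) else 0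

lemma Bc_nonneg (n : ℕ) (j : ℤ) : 0 ≤ Bc n j := by
  unfold Bc; split <;> positivity

lemma Bc_neg (n : ℕ) {j : ℤ} (hj : j < 0) : Bc n j = 0 := if_neg (by omega)

lemma Bc_of_nonneg (n : ℕ) {j : ℤ} (hj : 0 ≤ j) : Bc n j = (n.choose j.toNat : ℤ) :=
  if_pos hj

lemma Bc_pascal (n : ℕ) (j : ℤ) : Bc (n+1) j = Bc n j + Bc n (j-1) := by
  rcases lt_trichotomy j 0 with h0 | h0 | h0
  · rw [Bc_neg _ h0, Bc_neg _ h0, Bc_neg _ (by omega)]; ring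
  · subst h0; norm_num [Bc]
  · have h1 : (0:ℤ) ≤ j := by omega
    have h2 : (0:ℤ) ≤ j - 1 := by omega
    rw [Bc_of_nonneg _ h1, Bc_of_nonneg _ h1, Bc_of_nonneg _ h2]
    have ht : j.toNat = (j-1).toNat + 1 := by omega
    rw [ht, Nat.choose_succ_succ]
    push_cast; ring

/-- The diagonal partial-sum kernel. -/
def NNk (r k a b : ℕ) : ℤ :=
  Bc (r+1-a) ((k:ℤ)-a) * Bc (r-b) ((k:ℤ)-b)
    - Bc (r+1-a) ((k:ℤ)-a+1) * Bc (r-b) ((k:ℤ)-b-1)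

lemma NNk_nonneg {r k a b : ℕ} (hab : a ≤ b) (hbr : b ≤ r) (hkr : k ≤ r) :
    0 ≤ NNk r k a b := by
  unfold NNk
  by_cases hbk : (k:ℤ) - b - 1 < 0
  · rw [Bc_neg _ hbk]
    have := mul_nonneg (Bc_nonneg (r+1-a) ((k:ℤ)-a)) (Bc_nonneg (r-b) ((k:ℤ)-b))
    nlinarith [this]
  · push_neg at hbk
    have hbk' : b + 1 ≤ k := by omega
    have hak : a + 1 ≤ k := by omega
    -- rewrite the four Bc's as natural binomial coefficients
    have e1 : ((k:ℤ) - a) = ((k - a : ℕ) : ℤ) := by omega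
    have e2 : ((k:ℤ) - b) = ((k - b : ℕ) : ℤ) := by omega
    rw [e1, e2]
    have e3 : (((k - a:ℕ):ℤ) + 1) = ((k - a + 1 : ℕ) : ℤ) := by omega
    have e4 : (((k - b:ℕ):ℤ) - 1) = ((k - b - 1 : ℕ) : ℤ) := by omega
    rw [e3, e4, Bc_of_nonneg _ (by positivity), Bc_of_nonneg _ (by positivity),
      Bc_of_nonneg _ (by positivity), Bc_of_nonneg _ (by positivity)]
    rw [sub_nonneg]
    have tn : ∀ m : ℕ, ((m:ℤ)).toNat = m := fun m => by omega
    rw [tn, tn, tn, tn]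
    have key : (r+1-a).choose (k-a+1) * (r-b).choose (k-b-1)
        ≤ (r+1-a).choose (k-a) * (r-b).choose (k-b) := by
      have hpos : 0 < (k-a+1) * (r-k+1) := by
        apply Nat.mul_pos <;> omega
      apply Nat.le_of_mul_le_mul_right _ hpos
      have A : (r+1-a).choose (k-a+1) * (k-a+1)
          = (r+1-a).choose (k-a) * (r+1-k) := by
        have := Nat.choose_succ_right_eq (r+1-a) (k-a)
        rw [this]; congr 1; omega
      have B : (r-b).choose (k-b) * (k-b) = (r-b).choose (k-b-1) * (r-k+1) := by
        have h5 : k - b = (k-b-1) + 1 := by omega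
        rw [h5, Nat.choose_succ_right_eq (r-b) (k-b-1)]
        congr 1; omega
      calc (r+1-a).choose (k-a+1) * (r-b).choose (k-b-1) * ((k-a+1) * (r-k+1))
          = ((r+1-a).choose (k-a+1) * (k-a+1)) * ((r-b).choose (k-b-1) * (r-k+1)) := by ring
        _ = ((r+1-a).choose (k-a) * (r+1-k)) * ((r-b).choose (k-b) * (k-b)) := by
            rw [A, B]; try ring
        _ ≤ ((r+1-a).choose (k-a) * (r-b).choose (k-b)) * ((k-a+1) * (r-k+1)) := by
            have h6 : (r+1-k) * (k-b) ≤ (k-a+1) * (r-k+1) := by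
              have e7 : r+1-k = r-k+1 := by omega
              rw [e7, Nat.mul_comm (k-a+1)]
              exact Nat.mul_le_mul_left _ (by omega)
            calc (r+1-a).choose (k-a) * (r+1-k) * ((r-b).choose (k-b) * (k-b))
                = ((r+1-a).choose (k-a) * (r-b).choose (k-b)) * ((r+1-k) * (k-b)) := by ring
              _ ≤ _ := Nat.mul_le_mul_left _ h6
    exact_mod_cast key

lemma NNk_below_diag {r k b : ℕ} (hbr : b ≤ r) : NNk r k (b+1) b = 0 := by
  unfold NNk
  have e0 : r + 1 - (b+1) = r - b := by omega
  have e1 : ((k:ℤ) - (b+1 : ℕ)) = (k:ℤ) - b - 1 := by push_cast; ring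
  rw [e0, e1]
  have e2 : ((k:ℤ) - b - 1 + 1) = (k:ℤ) - b := by ring
  rw [e2]; ring

lemma NNk_diag {r k a : ℕ} (har : a ≤ r) :
    Bc (r-a) ((k:ℤ)-a) * Bc (r-a) ((k:ℤ)-a)
      - Bc (r-a) ((k:ℤ)-a-1) * Bc (r-a) ((k:ℤ)-a+1) = NNk r k a a := by
  unfold NNk
  have e0 : r + 1 - a = (r - a) + 1 := by omega
  rw [e0, Bc_pascal, Bc_pascal]
  have e1 : ((k:ℤ) - a + 1 - 1) = (k:ℤ) - a := by ring
  rw [e1]; ring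

lemma NNk_pair {r k a b : ℕ} (har : a ≤ r) (hb1 : 1 ≤ b) (hbr : b ≤ r) :
    (Bc (r-a) ((k:ℤ)-a) * Bc (r-b) ((k:ℤ)-b)
        - Bc (r-a) ((k:ℤ)-a-1) * Bc (r-b) ((k:ℤ)-b+1))
      + (Bc (r-b) ((k:ℤ)-b) * Bc (r-a) ((k:ℤ)-a)
        - Bc (r-b) ((k:ℤ)-b-1) * Bc (r-a) ((k:ℤ)-a+1))
      = NNk r k a b - NNk r k (a+1) (b-1) := by
  unfold NNk
  have e0 : r + 1 - a = (r - a) + 1 := by omega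
  have e1 : r + 1 - (a+1) = r - a := by omega
  have e2 : r - (b-1) = (r - b) + 1 := by omega
  have e3 : ((k:ℤ) - (a+1:ℕ)) = (k:ℤ) - a - 1 := by push_cast; ring
  have e4 : ((k:ℤ) - (a+1:ℕ) + 1) = (k:ℤ) - a := by push_cast; ring
  have e5 : ((k:ℤ) - (b-1:ℕ)) = (k:ℤ) - b + 1 := by
    have : ((b-1:ℕ):ℤ) = (b:ℤ) - 1 := by omega
    rw [this]; ring
  have e6 : ((k:ℤ) - (b-1:ℕ) - 1) = (k:ℤ) - b := by
    have : ((b-1:ℕ):ℤ) = (b:ℤ) - 1 := by omega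
    rw [this]; ring
  rw [e0, e1, e2, e4, e3, e6, e5, Bc_pascal, Bc_pascal, Bc_pascal, Bc_pascal]
  have f1 : ((k:ℤ) - a + 1 - 1) = (k:ℤ) - a := by ring
  have f2 : ((k:ℤ) - b + 1 - 1) = (k:ℤ) - b := by ring
  have f3 : ((k:ℤ) - a - 1 + 1) = (k:ℤ) - a := by ring
  rw [f1, f2]; ring

lemma hpair (r : ℕ) (h : ℕ → ℤ)
    (h_nonneg : ∀ i, i ≤ r → 0 ≤ h i)
    (h_logconcave : ∀ i, 0 < i → i < r → h (i - 1) * h (i + 1) ≤ h i ^ 2)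
    (h_no_internal_zeros :
      ¬ ∃ i j k, i < j ∧ j < k ∧ k ≤ r ∧ h i ≠ 0 ∧ h j = 0 ∧ h k ≠ 0) :
    ∀ (d a b : ℕ), a + 1 + d = b → b + 1 ≤ r → h a * h (b+1) ≤ h (a+1) * h b := by
  intro d
  induction d with
  | zero =>
    intro a b hab hbr
    subst hab
    have := h_logconcave (a+1) (by omega) (by omega)
    simpa [pow_two] using this
  | succ d ih =>
    intro a b hab hbr
    by_cases ha : h a = 0
    · rw [ha, zero_mul]
      exact mul_nonneg (h_nonneg _ (by omega)) (h_nonneg _ (by omega))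
    by_cases hb1 : h (b+1) = 0
    · rw [hb1, mul_zero]
      exact mul_nonneg (h_nonneg _ (by omega)) (h_nonneg _ (by omega))
    -- now h a ≠ 0 and h (b+1) ≠ 0, so everything in between is nonzero
    have hb : h b ≠ 0 := by
      intro hb0
      exact h_no_internal_zeros ⟨a, b, b+1, by omega, by omega, hbr, ha, hb0, hb1⟩
    have hm : h (a+1+d) ≠ 0 := by
      intro hm0
      exact h_no_internal_zeros ⟨a, a+1+d, b+1, by omega, by omega, hbr, ha, hm0, hb1⟩
    have hbpos : 0 < h b := lt_of_le_of_ne (h_nonneg _ (by omega)) (Ne.symm hb)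
    have hmpos : 0 < h (a+1+d) := lt_of_le_of_ne (h_nonneg _ (by omega)) (Ne.symm hm)
    have IH : h a * h (a+1+d+1) ≤ h (a+1) * h (a+1+d) := ih a (a+1+d) rfl (by omega)
    have LC : h (b-1) * h (b+1) ≤ h b ^ 2 := h_logconcave b (by omega) (by omega)
    have eb : b - 1 = a + 1 + d := by omega
    have eb2 : a + 1 + d + 1 = b := by omega
    rw [eb, pow_two] at LC
    rw [eb2] at IH
    have mull := mul_le_mul IH LC (mul_nonneg (h_nonneg _ (by omega)) (h_nonneg _ (by omega)))
      (mul_nonneg (h_nonneg _ (by omega)) (h_nonneg _ (by omega)))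
    nlinarith [mull, mul_pos hmpos hbpos, h_nonneg a (by omega : a ≤ r),
      h_nonneg (b+1) hbr, h_nonneg (a+1) (by omega : a+1 ≤ r)]

/-- unsymmetrized quadratic kernel -/
def uu (r i a b : ℕ) : ℤ :=
  Bc (r-a) ((i:ℤ)-a) * Bc (r-b) ((i:ℤ)-b) - Bc (r-a) ((i:ℤ)-a-1) * Bc (r-b) ((i:ℤ)-b+1)

lemma key_ineq (r i : ℕ) (h : ℕ → ℤ) (hi0 : 0 < i) (hir : i < r)
    (h_nonneg : ∀ j, j ≤ r → 0 ≤ h j)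
    (hpp : ∀ a b : ℕ, 1 ≤ a → a ≤ b → b + 1 ≤ r → h (a-1) * h (b+1) ≤ h a * h b) :
    (∑ a ∈ range (i+2), Bc (r-a) ((i:ℤ)-a-1) * h a)
        * (∑ a ∈ range (i+2), Bc (r-a) ((i:ℤ)-a+1) * h a)
      ≤ (∑ a ∈ range (i+2), Bc (r-a) ((i:ℤ)-a) * h a)
        * (∑ a ∈ range (i+2), Bc (r-a) ((i:ℤ)-a) * h a) := by
  rw [← sub_nonneg]
  set n := i + 2 with hn
  set Sq : Finset (ℕ × ℕ) := range n ×ˢ range n with hSq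
  have memSq : ∀ p : ℕ × ℕ, p ∈ Sq ↔ p.1 < n ∧ p.2 < n := by
    intro p; simp [hSq, Finset.mem_product]
  have E1 : (∑ a ∈ range n, Bc (r-a) ((i:ℤ)-a) * h a)
        * (∑ a ∈ range n, Bc (r-a) ((i:ℤ)-a) * h a)
      - (∑ a ∈ range n, Bc (r-a) ((i:ℤ)-a-1) * h a)
        * (∑ a ∈ range n, Bc (r-a) ((i:ℤ)-a+1) * h a)
      = ∑ p ∈ Sq, uu r i p.1 p.2 * (h p.1 * h p.2) := by
    rw [hSq, Finset.sum_product, Finset.sum_mul_sum, Finset.sum_mul_sum,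
      ← Finset.sum_sub_distrib]
    refine Finset.sum_congr rfl fun a _ => ?_
    rw [← Finset.sum_sub_distrib]
    refine Finset.sum_congr rfl fun b _ => ?_
    unfold uu; ring
  rw [E1]
  -- split the square into lower triangle, diagonal, upper triangle
  have split1 : ∑ p ∈ Sq, uu r i p.1 p.2 * (h p.1 * h p.2)
      = ∑ p ∈ Sq.filter (fun p => p.1 < p.2), uu r i p.1 p.2 * (h p.1 * h p.2)
        + (∑ p ∈ Sq.filter (fun p => p.1 = p.2), uu r i p.1 p.2 * (h p.1 * h p.2)
          + ∑ p ∈ Sq.filter (fun p => p.2 < p.1), uu r i p.1 p.2 * (h p.1 * h p.2)) := by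
    rw [← Finset.sum_filter_add_sum_filter_not Sq (fun p => p.1 < p.2)]
    congr 1
    rw [← Finset.sum_filter_add_sum_filter_not
      (Sq.filter (fun p => ¬ p.1 < p.2)) (fun p => p.1 = p.2), Finset.filter_filter,
      Finset.filter_filter]
    congr 1
    · apply Finset.sum_congr _ fun p _ => rfl
      apply Finset.filter_congr; intro p _; constructor <;> intro hh <;> omega
    · apply Finset.sum_congr _ fun p _ => rfl
      apply Finset.filter_congr; intro p _; constructor <;> intro hh <;> omega
  -- swap the upper triangle onto the lower
  have swap : ∑ p ∈ Sq.filter (fun p => p.2 < p.1), uu r i p.1 p.2 * (h p.1 * h p.2)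
      = ∑ p ∈ Sq.filter (fun p => p.1 < p.2), uu r i p.2 p.1 * (h p.1 * h p.2) := by
    refine Finset.sum_nbij' (fun p => (p.2, p.1)) (fun p => (p.2, p.1)) ?_ ?_ ?_ ?_ ?_
    · intro p hp; simp only [Finset.mem_filter, memSq] at hp ⊢
      omega
    · intro p hp; simp only [Finset.mem_filter, memSq] at hp ⊢
      omega
    · intro p _; rfl
    · intro p _; rfl
    · intro p _; ring
  -- combine the two lower-triangle sums via the Pascal pair identity
  have comb : ∑ p ∈ Sq.filter (fun p => p.1 < p.2), uu r i p.1 p.2 * (h p.1 * h p.2)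
      + ∑ p ∈ Sq.filter (fun p => p.1 < p.2), uu r i p.2 p.1 * (h p.1 * h p.2)
      = ∑ p ∈ Sq.filter (fun p => p.1 < p.2),
          (NNk r i p.1 p.2 - NNk r i (p.1+1) (p.2-1)) * (h p.1 * h p.2) := by
    rw [← Finset.sum_add_distrib]
    refine Finset.sum_congr rfl fun p hp => ?_
    simp only [Finset.mem_filter, memSq] at hp
    have hpair := NNk_pair (r:=r) (k:=i) (a:=p.1) (b:=p.2)
      (by omega) (by omega) (by omega)
    rw [← hpair]
    unfold uu; ring
  -- diagonal terms
  have diag : ∑ p ∈ Sq.filter (fun p => p.1 = p.2), uu r i p.1 p.2 * (h p.1 * h p.2)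
      = ∑ p ∈ Sq.filter (fun p => p.1 = p.2), NNk r i p.1 p.2 * (h p.1 * h p.2) := by
    refine Finset.sum_congr rfl fun p hp => ?_
    simp only [Finset.mem_filter, memSq] at hp
    obtain ⟨hmem, hpe⟩ := hp
    congr 1
    rw [← hpe, ← NNk_diag (r:=r) (k:=i) (a:=p.1) (by omega)]
    unfold uu
    rfl
  -- reindex the subtracted sum by (a,b) ↦ (a+1, b-1)
  have reix : ∑ p ∈ Sq.filter (fun p => p.1 < p.2), NNk r i (p.1+1) (p.2-1) * (h p.1 * h p.2)
      = ∑ p ∈ Sq.filter (fun p => 1 ≤ p.1 ∧ p.1 ≤ p.2 + 1 ∧ p.2 + 1 ≤ i + 1),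
          NNk r i p.1 p.2 * (h (p.1-1) * h (p.2+1)) := by
    refine Finset.sum_nbij' (fun p => (p.1+1, p.2-1)) (fun p => (p.1-1, p.2+1)) ?_ ?_ ?_ ?_ ?_
    · intro p hp; simp only [Finset.mem_filter, memSq] at hp ⊢; omega
    · intro p hp; simp only [Finset.mem_filter, memSq] at hp ⊢; omega
    · intro p hp; simp only [Finset.mem_filter, memSq] at hp
      have h1 : p.1 + 1 - 1 = p.1 := by omega
      have h2 : p.2 - 1 + 1 = p.2 := by omega
      show (p.1 + 1 - 1, p.2 - 1 + 1) = p
      rw [h1, h2]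
    · intro p hp; simp only [Finset.mem_filter, memSq] at hp
      have h1 : p.1 - 1 + 1 = p.1 := by omega
      have h2 : p.2 + 1 - 1 = p.2 := by omega
      show (p.1 - 1 + 1, p.2 + 1 - 1) = p
      rw [h1, h2]
    · intro p hp; simp only [Finset.mem_filter, memSq] at hp
      have h1 : p.1 + 1 - 1 = p.1 := by omega
      have h2 : p.2 - 1 + 1 = p.2 := by omega
      dsimp only
      rw [h1, h2]
  -- the just-below-diagonal part of the reindexed sum vanishes
  have reix2 : ∑ p ∈ Sq.filter (fun p => 1 ≤ p.1 ∧ p.1 ≤ p.2 + 1 ∧ p.2 + 1 ≤ i + 1),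
          NNk r i p.1 p.2 * (h (p.1-1) * h (p.2+1))
      = ∑ p ∈ Sq.filter (fun p => 1 ≤ p.1 ∧ p.1 ≤ p.2 ∧ p.2 + 1 ≤ i + 1),
          NNk r i p.1 p.2 * (h (p.1-1) * h (p.2+1)) := by
    rw [← Finset.sum_filter_add_sum_filter_not
      (Sq.filter (fun p => 1 ≤ p.1 ∧ p.1 ≤ p.2 + 1 ∧ p.2 + 1 ≤ i + 1))
      (fun p => p.1 ≤ p.2), Finset.filter_filter, Finset.filter_filter]
    have z : ∑ p ∈ Sq.filter (fun p =>
          (1 ≤ p.1 ∧ p.1 ≤ p.2 + 1 ∧ p.2 + 1 ≤ i + 1) ∧ ¬ p.1 ≤ p.2),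
        NNk r i p.1 p.2 * (h (p.1-1) * h (p.2+1)) = 0 := by
      apply Finset.sum_eq_zero
      intro p hp
      simp only [Finset.mem_filter, memSq] at hp
      have e : p.1 = p.2 + 1 := by omega
      rw [e, NNk_below_diag (by omega), zero_mul]
    rw [z, add_zero]
    apply Finset.sum_congr _ fun p _ => rfl
    apply Finset.filter_congr; intro p _; constructor <;> intro hh <;> omega
  -- merge the lt-part and diagonal NNk sums into a ≤-filtered sum
  have merge : ∑ p ∈ Sq.filter (fun p => p.1 < p.2), NNk r i p.1 p.2 * (h p.1 * h p.2)
      + ∑ p ∈ Sq.filter (fun p => p.1 = p.2), NNk r i p.1 p.2 * (h p.1 * h p.2)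
      = ∑ p ∈ Sq.filter (fun p => p.1 ≤ p.2), NNk r i p.1 p.2 * (h p.1 * h p.2) := by
    rw [← Finset.sum_filter_add_sum_filter_not
      (Sq.filter (fun p => p.1 ≤ p.2)) (fun p => p.1 < p.2), Finset.filter_filter,
      Finset.filter_filter]
    congr 1
    · apply Finset.sum_congr _ fun p _ => rfl
      apply Finset.filter_congr; intro p _; constructor <;> intro hh <;> omega
    · apply Finset.sum_congr _ fun p _ => rfl
      apply Finset.filter_congr; intro p _; constructor <;> intro hh <;> omega
  -- split the ≤-filtered sum into the T₁ part and the boundary part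
  have finsplit : ∑ p ∈ Sq.filter (fun p => p.1 ≤ p.2), NNk r i p.1 p.2 * (h p.1 * h p.2)
      = ∑ p ∈ Sq.filter (fun p => 1 ≤ p.1 ∧ p.1 ≤ p.2 ∧ p.2 + 1 ≤ i + 1),
          NNk r i p.1 p.2 * (h p.1 * h p.2)
        + ∑ p ∈ (Sq.filter (fun p => p.1 ≤ p.2)).filter
            (fun p => ¬ (1 ≤ p.1 ∧ p.2 + 1 ≤ i + 1)),
          NNk r i p.1 p.2 * (h p.1 * h p.2) := by
    rw [← Finset.sum_filter_add_sum_filter_not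
      (Sq.filter (fun p => p.1 ≤ p.2)) (fun p => 1 ≤ p.1 ∧ p.2 + 1 ≤ i + 1)]
    congr 1
    rw [Finset.filter_filter]
    apply Finset.sum_congr _ fun p _ => rfl
    apply Finset.filter_congr; intro p _; constructor <;> intro hh
    · omega
    · omega
  -- put everything together
  rw [split1, swap, diag]
  rw [show ∀ A B C : ℤ, A + (B + C) = A + C + B from fun A B C => by ring]
  rw [comb]
  have sep : ∑ p ∈ Sq.filter (fun p => p.1 < p.2),
        (NNk r i p.1 p.2 - NNk r i (p.1+1) (p.2-1)) * (h p.1 * h p.2)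
      = ∑ p ∈ Sq.filter (fun p => p.1 < p.2), NNk r i p.1 p.2 * (h p.1 * h p.2)
        - ∑ p ∈ Sq.filter (fun p => p.1 < p.2), NNk r i (p.1+1) (p.2-1) * (h p.1 * h p.2) := by
    rw [← Finset.sum_sub_distrib]
    exact Finset.sum_congr rfl fun p _ => by ring
  rw [sep, reix, reix2]
  rw [show ∀ X Y Z : ℤ, X - Y + Z = X + Z - Y from fun X Y Z => by ring]
  rw [merge, finsplit]
  rw [show ∀ X Y Z : ℤ, X + Y - Z = (X - Z) + Y from fun X Y Z => by ring]
  have last : ∑ p ∈ Sq.filter (fun p => 1 ≤ p.1 ∧ p.1 ≤ p.2 ∧ p.2 + 1 ≤ i + 1),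
        NNk r i p.1 p.2 * (h p.1 * h p.2)
      - ∑ p ∈ Sq.filter (fun p => 1 ≤ p.1 ∧ p.1 ≤ p.2 ∧ p.2 + 1 ≤ i + 1),
        NNk r i p.1 p.2 * (h (p.1-1) * h (p.2+1))
      = ∑ p ∈ Sq.filter (fun p => 1 ≤ p.1 ∧ p.1 ≤ p.2 ∧ p.2 + 1 ≤ i + 1),
        NNk r i p.1 p.2 * (h p.1 * h p.2 - h (p.1-1) * h (p.2+1)) := by
    rw [← Finset.sum_sub_distrib]
    exact Finset.sum_congr rfl fun p _ => by ring
  rw [last]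
  apply add_nonneg
  · apply Finset.sum_nonneg
    intro p hp
    simp only [Finset.mem_filter, memSq] at hp
    apply mul_nonneg
    · exact NNk_nonneg (by omega) (by omega) (by omega)
    · rw [sub_nonneg]
      exact hpp p.1 p.2 (by omega) (by omega) (by omega)
  · apply Finset.sum_nonneg
    intro p hp
    simp only [Finset.mem_filter, memSq] at hp
    apply mul_nonneg
    · exact NNk_nonneg (by omega) (by omega) (by omega)
    · exact mul_nonneg (h_nonneg p.1 (by omega)) (h_nonneg p.2 (by omega))


lemma Bc_sub_cast (n j a : ℕ) (haj : a ≤ j) : Bc n ((j:ℤ) - a) = (n.choose (j - a) : ℤ) := by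
  rw [Bc_of_nonneg _ (by omega)]
  have e : ((j:ℤ) - a).toNat = j - a := by omega
  rw [e]

/-- If `h 0, …, h r` is a log-concave sequence of nonnegative integers with
no internal zeros and `h 0 = 1`, then the sequence `w k = ∑_{i=0}^k (r-i).choose (k-i) * h i`
is log-concave with no internal zeros. -/
theorem whitney_numbers_log_concave
    (r : ℕ) (h : ℕ → ℤ)
    (h_nonneg : ∀ i, i ≤ r → 0 ≤ h i)
    (h_logconcave : ∀ i, 0 < i → i < r → h (i - 1) * h (i + 1) ≤ h i ^ 2)
    (h_no_internal_zeros :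
      ¬ ∃ i j k, i < j ∧ j < k ∧ k ≤ r ∧ h i ≠ 0 ∧ h j = 0 ∧ h k ≠ 0)
    (h_zero : h 0 = 1)
    (w : ℕ → ℤ)
    (hw : ∀ k, k ≤ r → w k = ∑ i ∈ Finset.range (k + 1),
      ((r - i).choose (k - i) : ℤ) * h i) :
    (∀ i, 0 < i → i < r → w (i - 1) * w (i + 1) ≤ w i ^ 2) ∧
      ¬ ∃ i j k, i < j ∧ j < k ∧ k ≤ r ∧ w i ≠ 0 ∧ w j = 0 ∧ w k ≠ 0 := by
  constructor
  · intro i hi0 hir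
    -- rewrite the three values of w as sums of length i+2 with the Bc coefficients
    have Hk : w i = ∑ a ∈ range (i+2), Bc (r-a) ((i:ℤ)-a) * h a := by
      rw [hw i (by omega)]
      have s1 : ∑ a ∈ range (i+1), ((r-a).choose (i-a) : ℤ) * h a
          = ∑ a ∈ range (i+1), Bc (r-a) ((i:ℤ)-a) * h a := by
        refine Finset.sum_congr rfl fun a ha => ?_
        rw [Bc_sub_cast _ _ _ (by simp only [Finset.mem_range] at ha; omega)]
      rw [s1]
      refine Finset.sum_subset (Finset.range_subset_range.2 (by omega)) fun a ha hna => ?_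
      simp only [Finset.mem_range] at ha hna
      rw [Bc_neg _ (by omega), zero_mul]
    have Hm : w (i-1) = ∑ a ∈ range (i+2), Bc (r-a) ((i:ℤ)-a-1) * h a := by
      rw [hw (i-1) (by omega)]
      have e0 : i - 1 + 1 = i := by omega
      rw [e0]
      have s1 : ∑ a ∈ range i, ((r-a).choose (i-1-a) : ℤ) * h a
          = ∑ a ∈ range i, Bc (r-a) ((i:ℤ)-a-1) * h a := by
        refine Finset.sum_congr rfl fun a ha => ?_
        simp only [Finset.mem_range] at ha
        have e : (i:ℤ) - a - 1 = (((i-1:ℕ)):ℤ) - a := by omega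
        rw [e, Bc_sub_cast _ _ _ (by omega)]
      rw [s1]
      refine Finset.sum_subset (Finset.range_subset_range.2 (by omega)) fun a ha hna => ?_
      simp only [Finset.mem_range] at ha hna
      rw [Bc_neg _ (by omega), zero_mul]
    have Hp : w (i+1) = ∑ a ∈ range (i+2), Bc (r-a) ((i:ℤ)-a+1) * h a := by
      rw [hw (i+1) (by omega)]
      refine Finset.sum_congr rfl fun a ha => ?_
      simp only [Finset.mem_range] at ha
      have e : (i:ℤ) - a + 1 = (((i+1:ℕ)):ℤ) - a := by omega
      rw [e, Bc_sub_cast _ _ _ (by omega)]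
    rw [Hm, Hk, Hp, pow_two]
    refine key_ineq r i h hi0 hir h_nonneg fun a b ha1 hab hbr => ?_
    have := hpair r h h_nonneg h_logconcave h_no_internal_zeros (b - a) (a-1) b
      (by omega) hbr
    have e : a - 1 + 1 = a := by omega
    rwa [e] at this
  · rintro ⟨i, j, k, hij, hjk, hkr, -, hj0, -⟩
    have hjr : j ≤ r := by omega
    have hpos : 0 < w j := by
      rw [hw j hjr]
      have h0mem : (0:ℕ) ∈ range (j+1) := by simp
      have hterm : (0:ℤ) < ((r - 0).choose (j - 0) : ℤ) * h 0 := by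
        simp only [Nat.sub_zero, h_zero, mul_one]
        exact_mod_cast Nat.choose_pos hjr
      refine lt_of_lt_of_le hterm (Finset.single_le_sum
        (f := fun a => ((r - a).choose (j - a) : ℤ) * h a) (fun a ha => ?_) h0mem)
      simp only [Finset.mem_range] at ha
      exact mul_nonneg (by positivity) (h_nonneg a (by omega))
    omega
end

section
/- Let $M$ be a matroid on ground set $E$ of rank $r+1$, and let $M \times p = (M^* + p)^*$ be its free dual extension, with the ground set $E \cup \{p\}$ linearly ordered so that $p$ is the least element. Then a subset $S \subseteq E$ is independent in $M$ if and only if $S$ contains no broken circuit of $M \times p$; that is, $\mathrm{IN}(M) = \overline{\mathrm{BC}}(M \times p)$. -/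
/-! The bases of the free extension `N = M✶ + p` are the bases of `M✶` together with the sets
`J ∪ {p}`, `J` independent in `M✶` with one element fewer than a base. Dually, for `I ⊆ E` the set
`I ∪ {p}` is independent in `M × p = N✶` exactly when `I` is independent in `M`, and `I ∪ {e}` is
independent in `M × p` whenever `I` is independent in `M`: if `e` lies outside a base `B ⊇ I` of
`M`, the `N`-base `(E \ (B ∪ {e})) ∪ {p}` avoids it. Hence no circuit of `M × p` becomes
`M`-independent after removing its least element, while every circuit `C` of `M` gives the
circuit `C ∪ {p}` of `M × p`, whose broken circuit is `C` because `p` is least. -/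

open Finset

open Set

namespace Matroid

variable {α : Type*} {M : Matroid α} {B : Set α}

lemma matroidRank_ground_eq_ncard [M.RankFinite] (hB : M.IsBase B) :
    matroidRank M M.E = B.ncard := by
  refine IsGreatest.csSup_eq ⟨⟨hB.finite.toFinset, by simpa using hB.subset_ground,
    by simpa using hB.indep, (ncard_eq_toFinset_card B hB.finite).symm⟩, ?_⟩
  rintro n ⟨J, -, hJ, rfl⟩
  obtain ⟨B', hB', hJB'⟩ := hJ.exists_isBase_superset
  rw [← hB'.ncard_eq_ncard_of_isBase hB, ← ncard_coe_finset]
  exact ncard_le_ncard hJB' hB'.finite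

lemma exists_isMatroidCircuit_subset [M.Finite] {S : Finset α} (hSE : ↑S ⊆ M.E)
    (hS : ¬ M.Indep ↑S) : ∃ C ⊆ S, IsMatroidCircuit M C := by
  obtain ⟨C, hCS, hC⟩ := ((not_indep_iff hSE).1 hS).exists_isCircuit_subset
  have hCfin : C.Finite := (S.finite_toSet).subset hCS
  refine ⟨hCfin.toFinset, by simpa using hCS, by simpa using hC.subset_ground,
    by simpa using hC.not_indep, fun D hD => hC.ssubset_indep ?_⟩
  simpa using hD

end Matroid

structure IsFreeExtension {α : Type*} (N K : Matroid α) (p : α) : Prop where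
  notMem_ground : p ∉ K.E
  ground_eq : N.E = insert p K.E
  indep_iff : ∀ I : Set α, N.Indep I ↔
    ((K.Indep I ∧ p ∉ I) ∨
      (p ∈ I ∧ K.Indep (I \ {p}) ∧ (I \ {p}).ncard < matroidRank K K.E))

namespace IsFreeExtension

open Matroid

variable {α : Type*} {M K N : Matroid α} {B I : Set α} {p e : α}

lemma isBase_of_isBase [K.RankFinite] (hN : IsFreeExtension N K p) (hB : K.IsBase B) :
    N.IsBase B := by
  have hpB : p ∉ B := fun h => hN.notMem_ground (hB.subset_ground h)
  refine ((hN.indep_iff B).2 (.inl ⟨hB.indep, hpB⟩)).isBase_of_maximal fun J hJ hBJ => ?_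
  rcases (hN.indep_iff J).1 hJ with ⟨hJ, -⟩ | ⟨-, hJ, hcard⟩
  · exact hB.eq_of_subset_indep hJ hBJ
  · rw [matroidRank_ground_eq_ncard hB] at hcard
    exact absurd (ncard_le_ncard (subset_sdiff_singleton hBJ hpB) hJ.finite) hcard.not_ge

lemma isBase_insert [K.RankFinite] (hN : IsFreeExtension N K p) (hI : K.Indep I) (hpI : p ∉ I)
    (hcard : I.ncard + 1 = matroidRank K K.E) : N.IsBase (insert p I) := by
  have hIp : insert p I \ {p} = I := by simpa using hpI
  have hNI : N.Indep (insert p I) :=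
    (hN.indep_iff _).2 (.inr ⟨mem_insert p I, by rwa [hIp], by rw [hIp]; omega⟩)
  refine hNI.isBase_of_maximal fun J hJ hIJ => ?_
  have hpJ : p ∈ J := hIJ (mem_insert p I)
  obtain ⟨-, hJ, hJcard⟩ := ((hN.indep_iff J).1 hJ).resolve_left fun h => h.2 hpJ
  have hIJp : I ⊆ J \ {p} := subset_sdiff_singleton ((subset_insert p I).trans hIJ) hpI
  have hJI : J \ {p} = I := (eq_of_subset_of_ncard_le hIJp (by omega) hJ.finite).symm
  rw [← hJI, insert_sdiff_singleton, insert_eq_of_mem hpJ]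

lemma isBase_of_notMem [K.RankFinite] (hN : IsFreeExtension N K p) (hB : N.IsBase B)
    (hpB : p ∉ B) : K.IsBase B := by
  have hBK : K.Indep B := (((hN.indep_iff B).1 hB.indep).resolve_right fun h => hpB h.1).1
  obtain ⟨B', hB', hBB'⟩ := hBK.exists_isBase_superset
  rwa [hB.eq_of_subset_indep (hN.isBase_of_isBase hB').indep hBB']

variable [M.Finite] (hN : IsFreeExtension N M✶ p)
include hN

lemma dual_indep_insert_iff (hI : I ⊆ M.E) : N✶.Indep (insert p I) ↔ M.Indep I := by
  rw [dual_indep_iff_exists', hN.ground_eq]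
  constructor
  · rintro ⟨-, B, hB, hdisj⟩
    have hMB : M✶.IsBase B := hN.isBase_of_notMem hB (disjoint_left.1 hdisj (mem_insert p I))
    exact hMB.compl_isBase_of_dual.indep.subset
      (subset_sdiff.2 ⟨hI, hdisj.mono_left (subset_insert p I)⟩)
  · intro h
    obtain ⟨B, hB, hIB⟩ := h.exists_isBase_superset
    refine ⟨insert_subset_insert hI, M.E \ B, hN.isBase_of_isBase hB.compl_isBase_dual, ?_⟩
    rw [Set.disjoint_insert_left]
    exact ⟨fun h => hN.notMem_ground h.1, disjoint_sdiff_right.mono_left hIB⟩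

lemma dual_indep_insert (hI : M.Indep I) (he : e ∈ insert p M.E) : N✶.Indep (insert e I) := by
  obtain rfl | he := he
  · exact (hN.dual_indep_insert_iff hI.subset_ground).2 hI
  obtain ⟨B, hB, hIB⟩ := hI.exists_isBase_superset
  by_cases heB : e ∈ B
  · exact ((hN.dual_indep_insert_iff (insert_subset he hI.subset_ground)).2
      (hB.indep.subset (insert_subset heB hIB))).subset (subset_insert _ _)
  have hX : M.E \ insert e B = (M.E \ B) \ {e} := by
    rw [sdiff_sdiff, union_comm, singleton_union]
  have hXbase : N.IsBase (insert p (M.E \ insert e B)) := by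
    refine hN.isBase_insert (hB.compl_isBase_dual.indep.subset (sdiff_subset_sdiff_right
      (subset_insert e B))) (fun h => hN.notMem_ground h.1) ?_
    rw [matroidRank_ground_eq_ncard hB.compl_isBase_dual, hX, ncard_sdiff_singleton_add_one
      (show e ∈ M.E \ B from ⟨he, heB⟩) hB.compl_isBase_dual.finite]
  refine dual_indep_iff_exists'.2 ⟨?_, _, hXbase, disjoint_left.2 ?_⟩
  · rw [hN.ground_eq]
    exact (insert_subset he hI.subset_ground).trans (subset_insert p _)
  rintro x hx (rfl | ⟨-, hxeB⟩)
  · exact hN.notMem_ground ((insert_subset he hI.subset_ground) hx)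
  · exact hxeB (insert_subset_insert hIB hx)

lemma isMatroidCircuit_dual_insert [DecidableEq α] {C : Finset α} (hC : IsMatroidCircuit M C) :
    IsMatroidCircuit N✶ (insert p C) := by
  obtain ⟨hCE, hCdep, hCmin⟩ := hC
  have hpC : p ∉ C := fun h => hN.notMem_ground (hCE h)
  refine ⟨?_, ?_, fun D hD => ?_⟩
  · rw [coe_insert, dual_ground, hN.ground_eq]
    exact insert_subset_insert hCE
  · rwa [coe_insert, hN.dual_indep_insert_iff hCE]
  obtain ⟨x, hx, hxD⟩ := Finset.exists_of_ssubset hD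
  refine Indep.subset ?_ (coe_subset.2 (Finset.subset_erase.2 ⟨hD.subset, hxD⟩))
  obtain rfl | hxC := Finset.mem_insert.1 hx
  · obtain ⟨m, hm⟩ : C.Nonempty := Finset.nonempty_iff_ne_empty.2 fun h =>
      hCdep (by simp [h])
    rw [Finset.erase_insert hpC, ← Finset.insert_erase hm, coe_insert]
    exact hN.dual_indep_insert (hCmin _ (Finset.erase_ssubset hm))
      (mem_insert_of_mem _ (hCE hm))
  · rw [Finset.erase_insert_of_ne (ne_of_mem_of_not_mem hxC hpC).symm, coe_insert]
    exact hN.dual_indep_insert (hCmin _ (Finset.erase_ssubset hxC)) (mem_insert _ _)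

end IsFreeExtension

open scoped Classical in
theorem independence_complex_eq_reduced_broken_circuit_complex_general
    {α : Type*} [Fintype α] [LinearOrder α]
    (M : Matroid α)
    (p : α) (hp : p ∉ M.E) (hleast : ∀ x : α, p ≤ x)
    (N : Matroid α)
    (hNE : N.E = insert p M.E)
    (hNI : ∀ I : Set α, N.Indep I ↔
      ((M✶.Indep I ∧ p ∉ I) ∨
        (p ∈ I ∧ M✶.Indep (I \ {p}) ∧ (I \ {p}).ncard < matroidRank M✶ M✶.E))) :
    ∀ S : Finset α, ↑S ⊆ M.E →
      (M.Indep ↑S ↔ ∀ B, IsBrokenCircuit N✶ B → ¬ B ⊆ S) := by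
  have hN : IsFreeExtension N M✶ p := ⟨hp, hNE, hNI⟩
  intro S hSE
  constructor
  · rintro hS B ⟨C, ⟨hCE, hCdep, -⟩, hne, rfl⟩ hBS
    apply hCdep
    rw [← Finset.insert_erase (C.min'_mem hne), coe_insert]
    exact hN.dual_indep_insert (hS.subset (coe_subset.2 hBS)) (hNE ▸ hCE (C.min'_mem hne))
  · intro h
    by_contra hS
    obtain ⟨C, hCS, hC⟩ := Matroid.exists_isMatroidCircuit_subset hSE hS
    have hmin : (insert p C).min' (insert_nonempty p C) = p :=
      le_antisymm (min'_le _ p (mem_insert_self p C)) (hleast _)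
    refine h C ⟨insert p C, hN.isMatroidCircuit_dual_insert hC, insert_nonempty p C, ?_⟩ hCS
    rw [hmin, erase_insert fun hpC => hp (hC.1 hpC)]

open scoped Classical in
/-- **Brylawski.** Let `M` be a matroid of rank `r+1` on `E` and let
`M × p = (M✶ + p)✶` be its free dual extension (`N` below is the free extension `M✶ + p`,
so `N✶` is the free dual extension), with the ground set ordered so that `p` is least.
Then a subset `S ⊆ E` is independent in `M` iff `S` contains no broken circuit of `M × p`;
that is, `IN(M) = BC̄(M × p)`. -/
theorem independence_complex_eq_reduced_broken_circuit_complex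
    {α : Type*} [Fintype α] [LinearOrder α]
    (M : Matroid α) (r : ℕ) (h_rank : matroidRank M M.E = r + 1)
    (p : α) (hp : p ∉ M.E) (hleast : ∀ x : α, p ≤ x)
    (N : Matroid α)
    (hNE : N.E = insert p M.E)
    (hNI : ∀ I : Set α, N.Indep I ↔
      ((M✶.Indep I ∧ p ∉ I) ∨
        (p ∈ I ∧ M✶.Indep (I \ {p}) ∧ (I \ {p}).ncard < matroidRank M✶ M✶.E))) :
    ∀ S : Finset α, ↑S ⊆ M.E →
      (M.Indep ↑S ↔ ∀ B, IsBrokenCircuit N✶ B → ¬ B ⊆ S) :=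
  independence_complex_eq_reduced_broken_circuit_complex_general M p hp hleast N hNE hNI
end

section
/- Let $M$ be a finite loopless matroid of rank $r+1$ on a linearly ordered ground set. Then the broken circuit complex $\mathrm{BC}(M)$ is a pure simplicial complex of dimension $r$: every maximal subset of the ground set containing no broken circuit has cardinality exactly $r+1$, and moreover every face of $\mathrm{BC}(M)$ is an independent set of $M$. -/
open Finset

/-- `S` is a face of the broken circuit complex `BC(M)`: it contains no broken circuit. -/
def NoBrokenCircuit {α : Type*} [LinearOrder α] (M : Matroid α) (S : Finset α) : Prop :=
  ∀ B, IsBrokenCircuit M B → ¬ B ⊆ S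

/-- Every dependent finset contains a circuit. -/
lemma exists_circuit_subset {α : Type*} (M : Matroid α) (hE : M.E = Set.univ) :
    ∀ S : Finset α, ¬ M.Indep ↑S → ∃ C, C ⊆ S ∧ IsMatroidCircuit M C := by
  intro S
  induction S using Finset.strongInduction with
  | _ S ih =>
    intro hS
    by_cases h : ∀ D : Finset α, D ⊂ S → M.Indep ↑D
    · exact ⟨S, Finset.Subset.refl S, by simp [hE], hS, h⟩
    · push_neg at h
      obtain ⟨D, hD, hDdep⟩ := h
      obtain ⟨C, hCD, hC⟩ := ih D hD hDdep
      exact ⟨C, hCD.trans hD.subset, hC⟩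

/-- A set containing no broken circuit is independent. -/
lemma nbc_indep {α : Type*} [LinearOrder α] (M : Matroid α) (hE : M.E = Set.univ)
    (S : Finset α) (hS : NoBrokenCircuit M S) : M.Indep ↑S := by
  by_contra hdep
  obtain ⟨C, hCS, hC⟩ := exists_circuit_subset M hE S hdep
  have hCne : C.Nonempty := Finset.nonempty_iff_ne_empty.mpr (by
    rintro rfl; exact hC.2.1 (by simp))
  exact hS (C.erase (C.min' hCne)) ⟨C, hC, hCne, rfl⟩
    ((Finset.erase_subset _ _).trans hCS)

/-- For a finite loopless matroid `M` of rank `r+1` on a linearly ordered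
ground set, the broken circuit complex `BC(M)` is pure of dimension `r`: every face is
independent in `M`, and every maximal face has cardinality exactly `r+1`. -/
theorem broken_circuit_complex_pure {α : Type*} [Fintype α] [LinearOrder α]
    (M : Matroid α) (hE : M.E = Set.univ)
    (h_loopless : ∀ a : α, M.Indep {a})
    (r : ℕ) (h_rank : matroidRank M Set.univ = r + 1) :
    (∀ S : Finset α, NoBrokenCircuit M S → M.Indep ↑S) ∧
      (∀ S : Finset α, NoBrokenCircuit M S →
        (∀ T : Finset α, S ⊆ T → NoBrokenCircuit M T → S = T) →
        S.card = r + 1) := by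
  classical
  have hground : ∀ X : Set α, X ⊆ M.E := fun X => by rw [hE]; exact Set.subset_univ X
  set T : Set ℕ := {n | ∃ I : Finset α, ↑I ⊆ (Set.univ : Set α) ∧ M.Indep ↑I ∧ I.card = n} with hT
  have hbdd : BddAbove T := ⟨Fintype.card α, by
    rintro n ⟨I, -, -, rfl⟩; exact I.card_le_univ⟩
  have h0 : (0 : ℕ) ∈ T := ⟨∅, by simp⟩
  have hmem : r + 1 ∈ T := by
    have := Nat.sSup_mem ⟨0, h0⟩ hbdd
    rwa [show sSup T = r + 1 from h_rank] at this
  obtain ⟨I, -, hIind, hIcard⟩ := hmem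
  have hcard_le : ∀ S : Finset α, M.Indep ↑S → S.card ≤ r + 1 := by
    intro S hSind
    have : S.card ∈ T := ⟨S, Set.subset_univ _, hSind, rfl⟩
    have := le_csSup hbdd this
    rwa [show sSup T = r + 1 from h_rank] at this
  refine ⟨fun S hS => nbc_indep M hE S hS, ?_⟩
  intro S hS hmax
  have hSind : M.Indep ↑S := nbc_indep M hE S hS
  refine le_antisymm (hcard_le S hSind) ?_
  by_contra hlt
  push_neg at hlt
  -- augment S by an element of I to find some element outside the closure of S
  have haug : ∃ x ∈ (↑I : Set α) \ ↑S, M.Indep (insert x ↑S) := by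
    refine hSind.augment hIind ?_
    rw [Set.encard_coe_eq_coe_finsetCard, Set.encard_coe_eq_coe_finsetCard, hIcard]
    exact_mod_cast hlt
  obtain ⟨x, hxIS, hxind⟩ := haug
  have hxS : x ∉ (↑S : Set α) := hxIS.2
  have hx_notcl : x ∉ M.closure ↑S :=
    ((hSind.insert_indep_iff_of_notMem hxS).mp hxind).2
  -- take the least element outside the closure of S
  set F : Finset α := Finset.univ.filter (fun y => y ∉ M.closure ↑S) with hF
  have hFne : F.Nonempty := ⟨x, by simp [hF, hx_notcl]⟩
  set e : α := F.min' hFne with he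
  have he_notcl : e ∉ M.closure ↑S :=
    (Finset.mem_filter.mp (F.min'_mem hFne)).2
  have he_min : ∀ y : α, y ∉ M.closure ↑S → e ≤ y := by
    intro y hy
    exact F.min'_le y (by simp [hF, hy])
  have heS : e ∉ S := fun h => he_notcl (M.subset_closure ↑S (hground _) h)
  -- `insert e S` contains no broken circuit
  have hNBC : NoBrokenCircuit M (insert e S) := by
    rintro B ⟨C, hC, hCne, rfl⟩ hBsub
    set m : α := C.min' hCne with hm
    by_cases heB : e ∈ C.erase m
    · -- derive a contradiction
      have heC : e ∈ C := Finset.mem_of_mem_erase heB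
      have hme : m ≠ e := (Finset.ne_of_mem_erase heB).symm
      have hmlt : m < e := lt_of_le_of_ne (C.min'_le e heC) hme
      have hCe_indep : M.Indep ↑(C.erase e) := hC.2.2 _ (Finset.erase_ssubset heC)
      have he_cl : e ∈ M.closure ↑(C.erase e) := by
        by_contra hnot
        have : M.Indep (insert e ↑(C.erase e)) := by
          rw [hCe_indep.insert_indep_iff_of_notMem (by simp)]
          exact ⟨by rw [hE]; trivial, hnot⟩
        rw [← Finset.coe_insert, Finset.insert_erase heC] at this
        exact hC.2.1 this
      have hsub : (↑(C.erase e) : Set α) ⊆ insert m ↑S := by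
        intro y hy
        simp only [Finset.coe_erase, Set.mem_diff, Set.mem_singleton_iff] at hy
        obtain ⟨hyC, hye⟩ := hy
        by_cases hym : y = m
        · exact Set.mem_insert_iff.mpr (Or.inl hym)
        · have hyB : y ∈ C.erase m := Finset.mem_erase.mpr ⟨hym, hyC⟩
          have := hBsub hyB
          rw [Finset.mem_insert] at this
          rcases this with h | h
          · exact absurd h hye
          · exact Set.mem_insert_iff.mpr (Or.inr h)
      by_cases hmcl : m ∈ M.closure ↑S
      · have h1 : (insert m ↑S : Set α) ⊆ M.closure ↑S :=
          Set.insert_subset hmcl (M.subset_closure ↑S (hground _))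
        have h2 : M.closure ↑(C.erase e) ⊆ M.closure ↑S := by
          calc M.closure ↑(C.erase e) ⊆ M.closure (insert m ↑S) :=
                M.closure_subset_closure hsub
            _ ⊆ M.closure (M.closure ↑S) := M.closure_subset_closure h1
            _ = M.closure ↑S := M.closure_closure _
        exact he_notcl (h2 he_cl)
      · exact absurd (he_min m hmcl) (not_le_of_gt hmlt)
    · -- then the broken circuit is inside S itself
      have : C.erase m ⊆ S := by
        intro y hy
        rcases Finset.mem_insert.mp (hBsub hy) with h | h
        · exact absurd (h ▸ hy) heB
        · exact h
      exact hS _ ⟨C, hC, hCne, rfl⟩ this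
  have := hmax (insert e S) (Finset.subset_insert e S) hNBC
  exact heS (this ▸ Finset.mem_insert_self e S)
end
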